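/- Let B be a category with finite products, T : B ⥤ B an endofunctor, and p : T ⟶ 𝟭_B a natural transformation. Let X, Y, Z be objects with trivializations t_X, t_Y, t_Z. For f : X ⟶ Y define δf := t_X.inv ≫ T f ≫ t_Y.hom ≫ π₁ : X ⨯ X ⟶ Y. Then: (i) t_X.inv ≫ T f ≫ t_Y.hom = ⟨f ∘ π₀, δf⟩ for every f : X ⟶ Y; (ii) δ(id_X) = π₁; (iii) δ(g ∘ f) = δg ∘ ⟨f ∘ π₀, δf⟩ for all f : X ⟶ Y and g : Y ⟶ Z. -/

import Mathlib

/-!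
In trivialized coordinates `T f` becomes a map `X ⨯ X ⟶ Y ⨯ Y`; naturality of `p` forces its
first component to be `f ∘ π₀`, so its second component `δf` determines it, and the identity and
chain rules for `δ` are the functoriality of `T` read off in the second component.
-/

open CategoryTheory CategoryTheory.Limits

universe v u

variable {B : Type u} [Category.{v} B] [HasFiniteProducts B]

structure Triv (T : B ⥤ B) (p : T ⟶ 𝟭 B) (X : B) where
  iso : T.obj X ≅ X ⨯ X
  hom_fst : iso.hom ≫ prod.fst = p.app X

noncomputable def deltaMap {T : B ⥤ B} {p : T ⟶ 𝟭 B} {X Y : B}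
    (tX : Triv T p X) (tY : Triv T p Y) (f : X ⟶ Y) : X ⨯ X ⟶ Y :=
  tX.iso.inv ≫ T.map f ≫ tY.iso.hom ≫ prod.snd

section

variable {T : B ⥤ B} {p : T ⟶ 𝟭 B} {X Y Z : B}

namespace Triv

lemma inv_comp_app (tX : Triv T p X) : tX.iso.inv ≫ p.app X = prod.fst := by
  rw [← tX.hom_fst, Iso.inv_hom_id_assoc]

noncomputable def map (tX : Triv T p X) (tY : Triv T p Y) (f : X ⟶ Y) : X ⨯ X ⟶ Y ⨯ Y :=
  tX.iso.inv ≫ T.map f ≫ tY.iso.hom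

lemma map_id (tX : Triv T p X) : tX.map tX (𝟙 X) = 𝟙 _ := by
  simp [map]

lemma map_comp (tX : Triv T p X) (tY : Triv T p Y) (tZ : Triv T p Z) (f : X ⟶ Y) (g : Y ⟶ Z) :
    tX.map tZ (f ≫ g) = tX.map tY f ≫ tY.map tZ g := by
  simp [map]

lemma map_fst (tX : Triv T p X) (tY : Triv T p Y) (f : X ⟶ Y) :
    tX.map tY f ≫ prod.fst = prod.fst ≫ f := by
  rw [map, Category.assoc, Category.assoc, tY.hom_fst, p.naturality, Functor.id_map,
    ← Category.assoc, tX.inv_comp_app]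

lemma map_snd (tX : Triv T p X) (tY : Triv T p Y) (f : X ⟶ Y) :
    tX.map tY f ≫ prod.snd = deltaMap tX tY f := by
  simp [map, deltaMap]

lemma map_eq_lift (tX : Triv T p X) (tY : Triv T p Y) (f : X ⟶ Y) :
    tX.map tY f = prod.lift (prod.fst ≫ f) (deltaMap tX tY f) := by
  apply prod.hom_ext
  · rw [map_fst, prod.lift_fst]
  · rw [map_snd, prod.lift_snd]

end Triv

lemma deltaMap_id (tX : Triv T p X) : deltaMap tX tX (𝟙 X) = prod.snd := by
  rw [← Triv.map_snd, Triv.map_id, Category.id_comp]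

lemma deltaMap_comp (tX : Triv T p X) (tY : Triv T p Y) (tZ : Triv T p Z)
    (f : X ⟶ Y) (g : Y ⟶ Z) :
    deltaMap tX tZ (f ≫ g) = tX.map tY f ≫ deltaMap tY tZ g := by
  rw [← Triv.map_snd, Triv.map_comp, Category.assoc, Triv.map_snd]

end

/-- (i) the conjugated map of `T f` is `⟨f ∘ π₀, δf⟩`; (ii) `δ(id) = π₁`;
(iii) the chain rule `δ(g ∘ f) = δg ∘ ⟨f ∘ π₀, δf⟩`. -/
theorem deltaMap_props {T : B ⥤ B} {p : T ⟶ 𝟭 B} {X Y Z : B}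
    (tX : Triv T p X) (tY : Triv T p Y) (tZ : Triv T p Z) :
    (∀ f : X ⟶ Y,
      tX.iso.inv ≫ T.map f ≫ tY.iso.hom = prod.lift (prod.fst ≫ f) (deltaMap tX tY f)) ∧
    (deltaMap tX tX (𝟙 X) = prod.snd) ∧
    (∀ (f : X ⟶ Y) (g : Y ⟶ Z),
      deltaMap tX tZ (f ≫ g) =
        prod.lift (prod.fst ≫ f) (deltaMap tX tY f) ≫ deltaMap tY tZ g) :=
  ⟨tX.map_eq_lift tY, deltaMap_id tX,
    fun f g => by rw [deltaMap_comp tX tY tZ, Triv.map_eq_lift]⟩
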